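/- Let n ≥ 1, let ρ₁, …, ρₙ ∈ (0,1) be pairwise distinct real numbers, let r ∈ {1,…,n}, and let x ∈ ℂ with |x| < 1. Then the series Σ_{k≥0} ((−1)ⁿ x)^k / (Γ(1−ρ_r−k)ⁿ · k! · ∏_{i≠r} Γ(1+ρ_r−ρ_i+k)) converges absolutely and equals (Γ(1−ρ_r)ⁿ · ∏_{i≠r} Γ(1+ρ_r−ρ_i))^{−1} · ₙF_{n−1}(ρ_r,…,ρ_r; 1+ρ_r−ρ₁, …, 1+ρ_r−ρₙ (the entry for i = r omitted); x), where the right-hand hypergeometric series is Σ_{k≥0} ((ρ_r)_k)ⁿ / (k! · ∏_{i≠r}(1+ρ_r−ρ_i)_k) · x^k. (This evaluates the GKZ Γ-series Φ_{𝕃,γ^{I_{n+r}}} in the convergence direction ν^{I_{n+r}} of the cone 𝒞₋, giving the local solutions at t = ∞.) -/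

import Mathlib

/-!
Shifting `1 - ρ` down by `k` with the functional equation gives
`Γ(1 - ρ - k) = (-1)^k Γ(1 - ρ) / (ρ)_k`, and `Γ(b + k) = Γ(b) (b)_k`; substituting both turns
the `k`-th term of the Γ-series into the constant prefactor times the `k`-th term of the
hypergeometric series, the signs `(-1)^(nk)` cancelling. That series has `n` Pochhammer symbols
upstairs and `n` downstairs (counting `k!`), so the ratio of consecutive terms tends to `x`
and it converges for `‖x‖ < 1`.
-/

open Polynomial Finset Filter Topology
open scoped Nat

theorem ascPochhammer_eval_one_sub_sub_natCast {R : Type*} [CommRing R] (t : R) (k : ℕ) :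
    (ascPochhammer R k).eval (1 - t - k) = (-1) ^ k * (ascPochhammer R k).eval t := by
  rw [show 1 - t - k = -(t + k - 1) by ring, ascPochhammer_eval_neg_eq_descPochhammer,
    descPochhammer_eval_eq_ascPochhammer]
  congr 2
  ring

theorem Complex.ne_neg_natCast_of_re_pos {z : ℂ} (hz : 0 < z.re) (m : ℕ) : z ≠ -m := by
  rintro rfl
  simp only [neg_re, natCast_re, Left.neg_pos_iff] at hz
  exact hz.not_ge m.cast_nonneg

theorem Complex.Gamma_add_nat_eq_mul_ascPochhammer {z : ℂ} (hz : ∀ m : ℕ, z ≠ -m) (k : ℕ) :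
    Gamma (z + k) = Gamma z * (ascPochhammer ℂ k).eval z := by
  rw [← Gamma_add_nat_div_Gamma_eq z hz, mul_div_cancel₀ _ (Gamma_ne_zero hz)]

theorem Complex.Gamma_one_sub_sub_nat {t : ℂ} (ht : ∀ m : ℤ, t ≠ m) (k : ℕ) :
    Gamma (1 - t - k) = (-1) ^ k * Gamma (1 - t) / (ascPochhammer ℂ k).eval t := by
  have hz : ∀ m : ℕ, 1 - t - k ≠ -m := fun m h =>
    ht (1 + m - k) (by push_cast; linear_combination -h)
  have hP : (ascPochhammer ℂ k).eval t ≠ 0 := by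
    rw [Ne, ascPochhammer_eval_eq_zero_iff]
    rintro ⟨m, -, hm⟩
    exact ht (-m) (by push_cast; linear_combination hm)
  have hshift := Gamma_add_nat_eq_mul_ascPochhammer hz k
  rw [sub_add_cancel, ascPochhammer_eval_one_sub_sub_natCast] at hshift
  have hsign : ((-1 : ℂ) ^ k) ^ 2 = 1 := by rw [← pow_mul, mul_comm, pow_mul]; norm_num
  rw [eq_div_iff hP, hshift]
  linear_combination (-(Gamma (1 - t - k) * (ascPochhammer ℂ k).eval t)) * hsign

theorem Complex.Gamma_series_term_eq {ι : Type*} {t : ℂ} (ht : ∀ m : ℤ, t ≠ m) (s : Finset ι)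
    {b : ι → ℂ} (hb : ∀ i ∈ s, ∀ m : ℕ, b i ≠ -m) (n : ℕ) (x : ℂ) (k : ℕ) :
    ((-1) ^ n * x) ^ k / (Gamma (1 - t - k) ^ n * k ! * ∏ i ∈ s, Gamma (b i + k)) =
      (Gamma (1 - t) ^ n * ∏ i ∈ s, Gamma (b i))⁻¹ *
        ((ascPochhammer ℂ k).eval t ^ n / (k ! * ∏ i ∈ s, (ascPochhammer ℂ k).eval (b i)) *
          x ^ k) := by
  rw [Gamma_one_sub_sub_nat ht, prod_congr rfl fun i hi =>
    Gamma_add_nat_eq_mul_ascPochhammer (hb i hi) k, prod_mul_distrib, mul_pow, div_pow,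
    mul_pow, ← pow_mul, ← pow_mul, mul_comm n k]
  field_simp

theorem tendsto_prod_add_natCast_div_pow {𝕜 ι : Type*} [RCLike 𝕜] (s : Finset ι) (a : ι → 𝕜) :
    Tendsto (fun k : ℕ => (∏ i ∈ s, (a i + k)) / (k : 𝕜) ^ #s) atTop (𝓝 1) := by
  have h := tendsto_finsetProd s fun i _ =>
    tendsto_add_mul_div_add_mul_atTop_nhds (a i) 0 1 (one_ne_zero (α := 𝕜))
  simp only [one_mul, zero_add, div_one, prod_const_one] at h
  simpa only [prod_div_distrib, prod_const] using h

section Hypergeometric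

variable {𝕜 ι κ : Type*} [RCLike 𝕜] (s : Finset ι) (a : ι → 𝕜) (t : Finset κ) (b : κ → 𝕜)

noncomputable def hypergeometricTerm (x : 𝕜) (k : ℕ) : 𝕜 :=
  (∏ i ∈ s, (ascPochhammer 𝕜 k).eval (a i)) /
    (k ! * ∏ j ∈ t, (ascPochhammer 𝕜 k).eval (b j)) * x ^ k

theorem hypergeometricTerm_succ (x : 𝕜) (k : ℕ) :
    hypergeometricTerm s a t b x (k + 1) = hypergeometricTerm s a t b x k *
      (x * ((∏ i ∈ s, (a i + k)) / ((k + 1) * ∏ j ∈ t, (b j + k)))) := by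
  simp only [hypergeometricTerm, ascPochhammer_succ_eval, prod_mul_distrib, Nat.factorial_succ,
    Nat.cast_mul, Nat.cast_succ, pow_succ]
  generalize (k : 𝕜) + 1 = c
  ring

theorem tendsto_hypergeometric_ratio (hst : #s = #t + 1) :
    Tendsto (fun k : ℕ => (∏ i ∈ s, (a i + k)) / ((k + 1) * ∏ j ∈ t, (b j + k))) atTop
      (𝓝 1) := by
  have h := (tendsto_prod_add_natCast_div_pow s a).div
    ((tendsto_add_mul_div_add_mul_atTop_nhds (1 : 𝕜) 0 1 one_ne_zero).mul
      (tendsto_prod_add_natCast_div_pow t b)) (by norm_num)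
  simp only [one_mul, zero_add, div_one, mul_one, Pi.div_def] at h
  refine h.congr' ?_
  filter_upwards [eventually_ne_atTop 0] with k hk
  have hk : (k : 𝕜) ≠ 0 := Nat.cast_ne_zero.mpr hk
  have hk1 : (k : 𝕜) + 1 ≠ 0 := Nat.cast_add_one_ne_zero k
  rw [hst, pow_succ, add_comm 1 (k : 𝕜)]
  field_simp

theorem summable_hypergeometricTerm (hst : #s = #t + 1) {x : 𝕜} (hx : ‖x‖ < 1) :
    Summable (hypergeometricTerm s a t b x) := by
  obtain ⟨r, hxr, hr1⟩ := exists_between hx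
  refine summable_of_ratio_norm_eventually_le hr1 ?_
  have hratio := ((tendsto_hypergeometric_ratio s a t b hst).const_mul x).norm
  rw [mul_one] at hratio
  filter_upwards [hratio.eventually (ge_mem_nhds hxr)] with k hk
  rw [hypergeometricTerm_succ, norm_mul, mul_comm]
  gcongr

end Hypergeometric

theorem gamma_series_at_infinity_general (n : ℕ) (ρ : Fin n → ℝ)
    (hρ : ∀ i, ρ i ∈ Set.Ioo (0 : ℝ) 1)
    (r : Fin n) (x : ℂ) (hx : ‖x‖ < 1) :
    Summable (fun k : ℕ => ((-1) ^ n * x) ^ k /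
      ((Complex.Gamma (1 - (ρ r : ℂ) - (k : ℂ))) ^ n * (k.factorial : ℂ) *
        ∏ i ∈ univ.erase r, Complex.Gamma (1 + (ρ r : ℂ) - (ρ i : ℂ) + (k : ℂ)))) ∧
    ∑' k : ℕ, ((-1) ^ n * x) ^ k /
        ((Complex.Gamma (1 - (ρ r : ℂ) - (k : ℂ))) ^ n * (k.factorial : ℂ) *
          ∏ i ∈ univ.erase r, Complex.Gamma (1 + (ρ r : ℂ) - (ρ i : ℂ) + (k : ℂ))) =
      ((Complex.Gamma (1 - (ρ r : ℂ))) ^ n *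
          ∏ i ∈ univ.erase r, Complex.Gamma (1 + (ρ r : ℂ) - (ρ i : ℂ)))⁻¹ *
        ∑' k : ℕ, ((ascPochhammer ℂ k).eval ((ρ r : ℂ))) ^ n /
          ((k.factorial : ℂ) *
            ∏ i ∈ univ.erase r, (ascPochhammer ℂ k).eval (1 + (ρ r : ℂ) - (ρ i : ℂ))) *
          x ^ k := by
  obtain ⟨hr0, hr1⟩ := hρ r
  have hρr : ∀ m : ℤ, (ρ r : ℂ) ≠ m := fun m h => by
    have hm : ρ r = m := by exact_mod_cast h
    have h0 : (0 : ℤ) < m := by exact_mod_cast hm ▸ hr0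
    have h1 : m < 1 := by exact_mod_cast hm ▸ hr1
    omega
  have hb : ∀ i ∈ univ.erase r, ∀ m : ℕ, 1 + (ρ r : ℂ) - ρ i ≠ -m := fun i _ =>
    Complex.ne_neg_natCast_of_re_pos (by
      simp only [Complex.sub_re, Complex.add_re, Complex.one_re, Complex.ofReal_re]
      linarith [(hρ i).2])
  have hterm := Complex.Gamma_series_term_eq hρr (univ.erase r) hb n x
  have hsum := summable_hypergeometricTerm univ (fun _ => (ρ r : ℂ)) (univ.erase r)
    (fun i => 1 + (ρ r : ℂ) - ρ i) (card_erase_add_one (mem_univ r)).symm hx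
  unfold hypergeometricTerm at hsum
  simp only [prod_const, card_univ, Fintype.card_fin] at hsum
  exact ⟨(hsum.mul_left _).congr fun k => (hterm k).symm, by rw [tsum_congr hterm, tsum_mul_left]⟩

/-- The GKZ Γ-series `Φ_{𝕃,γ^{I_{n+r}}}` in the convergence direction `ν^{I_{n+r}}`
of the cone `𝒞₋`, giving the local solutions at `t = ∞`: for pairwise distinct
`ρ₁, …, ρₙ ∈ (0,1)`, `r ∈ {1,…,n}` and `|x| < 1`, the series
`Σ_{k≥0} ((-1)ⁿx)^k / (Γ(1-ρ_r-k)ⁿ·k!·∏_{i≠r}Γ(1+ρ_r-ρ_i+k))` converges absolutely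
and equals `(Γ(1-ρ_r)ⁿ·∏_{i≠r}Γ(1+ρ_r-ρ_i))⁻¹` times the hypergeometric series
`Σ_{k≥0} ((ρ_r)_k)ⁿ/(k!·∏_{i≠r}(1+ρ_r-ρ_i)_k)·x^k`. -/
theorem gamma_series_at_infinity (n : ℕ) (hn : 1 ≤ n) (ρ : Fin n → ℝ)
    (hρ : ∀ i, ρ i ∈ Set.Ioo (0 : ℝ) 1) (hdist : Function.Injective ρ)
    (r : Fin n) (x : ℂ) (hx : ‖x‖ < 1) :
    Summable (fun k : ℕ => ((-1) ^ n * x) ^ k /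
      ((Complex.Gamma (1 - (ρ r : ℂ) - (k : ℂ))) ^ n * (k.factorial : ℂ) *
        ∏ i ∈ univ.erase r, Complex.Gamma (1 + (ρ r : ℂ) - (ρ i : ℂ) + (k : ℂ)))) ∧
    ∑' k : ℕ, ((-1) ^ n * x) ^ k /
        ((Complex.Gamma (1 - (ρ r : ℂ) - (k : ℂ))) ^ n * (k.factorial : ℂ) *
          ∏ i ∈ univ.erase r, Complex.Gamma (1 + (ρ r : ℂ) - (ρ i : ℂ) + (k : ℂ))) =
      ((Complex.Gamma (1 - (ρ r : ℂ))) ^ n *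
          ∏ i ∈ univ.erase r, Complex.Gamma (1 + (ρ r : ℂ) - (ρ i : ℂ)))⁻¹ *
        ∑' k : ℕ, ((ascPochhammer ℂ k).eval ((ρ r : ℂ))) ^ n /
          ((k.factorial : ℂ) *
            ∏ i ∈ univ.erase r, (ascPochhammer ℂ k).eval (1 + (ρ r : ℂ) - (ρ i : ℂ))) *
          x ^ k :=
  gamma_series_at_infinity_general n ρ hρ r x hx
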